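/- For classes U and W on the same level i of the profile tree T: if U is a descendant of first(gl(W)), then W ≼_i U (i.e., h_W ≤ h_U). Consequently, if U ≺_i W then U is not a descendant of first(gl(W)). -/

import Mathlib

/-!
Profile trees for Büchi determinization (Fisman–Kupferman–Vardi–Wilke style profiles).
Common definitions: nondeterministic Büchi word automata (NBW), the run DAG `G`,
profiles of nodes, and the pruned run DAG `G'`.
-/

/-- A nondeterministic Büchi word automaton `A = (Alph, Q, Qin, ρ, F)` with `Qin ∩ F = ∅`. -/
structure NBW (Alph Q : Type*) where
  Qin : Set Q
  ρ : Q → Alph → Set Q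
  F : Set Q
  disj : Qin ∩ F = ∅

variable {Alph Q : Type*} (A : NBW Alph Q) (w : ℕ → Alph)

/-- Lexicographic order `L₁ ≤ L₂` on profiles (lists over ℕ). -/
def lexLE (L₁ L₂ : List ℕ) : Prop :=
  List.Lex (· < ·) L₁ L₂ ∨ L₁ = L₂

/-- Strict lexicographic order `L₁ < L₂` on profiles. -/
def lexLT (L₁ L₂ : List ℕ) : Prop :=
  List.Lex (· < ·) L₁ L₂

open Classical in
/-- The profiles of all finite initial runs of `A` (on `w`) to the node `v = (q, i)`:
for each run `p₀,…,p_i` with `p₀ ∈ Qin`, `p_{j+1} ∈ ρ(p_j, w_j)` and `p_i = q`, the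
sequence of `F`-visitation labels `f(p₀,0) ⋯ f(p_i,i)` (where `f` is 1 on `F`-nodes, else 0). -/
def runProfiles (v : Q × ℕ) : Set (List ℕ) :=
  { L | ∃ p : ℕ → Q, p 0 ∈ A.Qin ∧ (∀ j < v.2, p (j + 1) ∈ A.ρ (p j) (w j)) ∧
        p v.2 = v.1 ∧ L = (List.range (v.2 + 1)).map (fun j => if p j ∈ A.F then 1 else 0) }

/-- `v` is a node of the run DAG `G = (V, E)` (equivalently of the pruned DAG `G'`):
there is a finite run of `A` to `v.1` on `w₀ ⋯ w_{v.2 - 1}`. -/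
def memV (v : Q × ℕ) : Prop := (runProfiles A w v).Nonempty

/-- `L` is the lexicographically maximal profile among all initial paths to `v`. -/
def IsMaxProfile (v : Q × ℕ) (L : List ℕ) : Prop :=
  L ∈ runProfiles A w v ∧ ∀ L' ∈ runProfiles A w v, lexLE L' L

open Classical in
/-- The profile `h_v` of a node `v`: the lexicographically maximal profile of an
initial path to `v` (junk value `[]` if `v` is not a node of the DAG). -/
noncomputable def profile (v : Q × ℕ) : List ℕ :=
  if h : ∃ L, IsMaxProfile A w v L then h.choose else []

/-- The edge relation `E` of the run DAG `G`: `E((q,i), (q',i+1))` iff `(q,i) ∈ V`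
and `q' ∈ ρ(q, w_i)`. -/
def edgeG (u v : Q × ℕ) : Prop :=
  memV A w u ∧ v.2 = u.2 + 1 ∧ v.1 ∈ A.ρ u.1 (w u.2)

/-- The edge relation `E'` of the pruned run DAG `G'`: `(u,v) ∈ E` and every
`E`-parent `u'` of `v` satisfies `h_{u'} ≤ h_u`. -/
def edgeG' (u v : Q × ℕ) : Prop :=
  edgeG A w u v ∧ ∀ u', edgeG A w u' v → lexLE (profile A w u') (profile A w u)

/-- The equivalence class (under equality of profiles, levelwise) of a node `u` of `G'`. -/
def classOf (u : Q × ℕ) : Set (Q × ℕ) :=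
  { v | memV A w v ∧ v.2 = u.2 ∧ profile A w v = profile A w u }

/-- `C` is a class (node) of the profile tree `T` on level `i`. -/
def ClassAt (C : Set (Q × ℕ)) (i : ℕ) : Prop :=
  ∃ u, memV A w u ∧ u.2 = i ∧ C = classOf A w u

/-- The child relation of the profile tree `T`: `[v]` is a child of `[u]`
whenever `(u, v) ∈ E'`. -/
def childC (C D : Set (Q × ℕ)) : Prop :=
  ∃ u v, edgeG' A w u v ∧ memV A w v ∧ C = classOf A w u ∧ D = classOf A w v

/-- `D` is a descendant of `C` in `T`: there is a (possibly empty) path from `C` to `D`. -/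
def DescC : Set (Q × ℕ) → Set (Q × ℕ) → Prop := Relation.ReflTransGen (childC A w)

/-- `C` is an `F`-class: all its members are `F`-nodes. -/
def IsFClass (C : Set (Q × ℕ)) : Prop := ∀ v ∈ C, v.1 ∈ A.F

/-- `h_C ≤ h_D` for classes `C`, `D` (members of a class all share one profile). -/
def profLE (C D : Set (Q × ℕ)) : Prop :=
  ∀ u ∈ C, ∀ v ∈ D, lexLE (profile A w u) (profile A w v)

/-- `h_C < h_D` for classes `C`, `D`. -/
def profLT (C D : Set (Q × ℕ)) : Prop :=
  ∀ u ∈ C, ∀ v ∈ D, lexLT (profile A w u) (profile A w v)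

/-- `C` (a class on level `i`) is before `D` (a class on level `j`):
`i < j`, or `i = j` and `h_C < h_D`. -/
def BeforeC (C : Set (Q × ℕ)) (i : ℕ) (D : Set (Q × ℕ)) (j : ℕ) : Prop :=
  i < j ∨ (i = j ∧ profLT A w C D)

/-- `C` (on level `i`) is `first(m)` for the labeling `gl`: the first class
(in the `before` order) labeled `m`. -/
def IsFirst (gl : Set (Q × ℕ) → ℕ) (m : ℕ) (C : Set (Q × ℕ)) (i : ℕ) : Prop :=
  ClassAt A w C i ∧ gl C = m ∧
    ∀ D j, ClassAt A w D j → gl D = m → ¬ BeforeC A w D j C i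

/-- `C` is a descendant of `first(m)` (for the labeling `gl`). -/
def DescFirst (gl : Set (Q × ℕ) → ℕ) (m : ℕ) (C : Set (Q × ℕ)) : Prop :=
  ∃ Fm j, IsFirst A w gl m Fm j ∧ DescC A w Fm C

/-- `C = lmd(m, i)` for the labeling `gl`: `C` is the class of lexicographically
minimal profile among the descendants of `first(m)` on level `i`. -/
def IsLmd (gl : Set (Q × ℕ) → ℕ) (m i : ℕ) (C : Set (Q × ℕ)) : Prop :=
  ClassAt A w C i ∧ DescFirst A w gl m C ∧
    ∀ D, ClassAt A w D i → DescFirst A w gl m D → profLE A w C D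

/-- `gl` is the global labeling of the profile tree `T`:
`gl(U₀) = 0` for the level-0 class; for every class `U` on level `i`,
if `labels(U) = {m ∣ U = lmd(m,i)}` is nonempty then `gl(U) = min(labels(U))`,
and otherwise `gl(U) = 1 + max{gl(W) ∣ W before U}`. -/
def GlSpec (gl : Set (Q × ℕ) → ℕ) : Prop :=
  (∀ C, ClassAt A w C 0 → gl C = 0) ∧
  ∀ C i, ClassAt A w C i →
    ((∃ m, IsLmd A w gl m i C) →
        IsLmd A w gl (gl C) i C ∧ ∀ m, IsLmd A w gl m i C → gl C ≤ m) ∧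
    ((¬ ∃ m, IsLmd A w gl m i C) →
        (∃ D j, ClassAt A w D j ∧ BeforeC A w D j C i ∧ gl C = gl D + 1) ∧
        ∀ D j, ClassAt A w D j → BeforeC A w D j C i → gl D < gl C)

/-!
If `W` carries a label, i.e. `W = lmd(gl W, i)`, then `W` is by definition minimal among the
descendants of `first(gl W)` on level `i`. Otherwise `gl W` is a fresh label, larger than that of
every class before `W`; then `W` is itself `first(gl W)`, and the only descendant of `W` on its
own level is `W`.
-/

lemma lexLE_iff_le {L M : List ℕ} : lexLE L M ↔ L ≤ M :=
  (le_iff_lt_or_eq (a := L) (b := M)).symm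

section ProfileTree

variable {A w}

lemma mem_classOf_self {u : Q × ℕ} (hu : memV A w u) : u ∈ classOf A w u :=
  ⟨hu, rfl, rfl⟩

lemma classOf_eq_of_profile_eq {u v : Q × ℕ} (hlev : u.2 = v.2)
    (hp : profile A w u = profile A w v) : classOf A w u = classOf A w v := by
  ext x
  constructor
  · rintro ⟨hx, hxlev, hxp⟩
    exact ⟨hx, hxlev.trans hlev, hxp.trans hp⟩
  · rintro ⟨hx, hxlev, hxp⟩
    exact ⟨hx, hxlev.trans hlev.symm, hxp.trans hp.symm⟩

lemma profLT_classOf_iff {u v : Q × ℕ} (hu : memV A w u) (hv : memV A w v) :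
    profLT A w (classOf A w u) (classOf A w v) ↔ profile A w u < profile A w v := by
  refine ⟨fun h => h u (mem_classOf_self hu) v (mem_classOf_self hv), fun h a ha b hb => ?_⟩
  rw [ha.2.2, hb.2.2]
  exact h

lemma ClassAt.level_unique {C : Set (Q × ℕ)} {i j : ℕ}
    (hi : ClassAt A w C i) (hj : ClassAt A w C j) : i = j := by
  obtain ⟨u, hu, rfl, rfl⟩ := hi
  obtain ⟨v, -, rfl, hC⟩ := hj
  exact (hC ▸ mem_classOf_self hu).2.1

lemma ClassAt.profLE_self {C : Set (Q × ℕ)} {i : ℕ} (hC : ClassAt A w C i) :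
    profLE A w C C := by
  obtain ⟨u, -, -, rfl⟩ := hC
  intro a ha b hb
  rw [ha.2.2, hb.2.2]
  exact Or.inr rfl

lemma ClassAt.not_profLE_of_profLT {C D : Set (Q × ℕ)} {i j : ℕ}
    (hC : ClassAt A w C i) (hD : ClassAt A w D j) (hlt : profLT A w C D) :
    ¬ profLE A w D C := by
  obtain ⟨u, hu, -, rfl⟩ := hC
  obtain ⟨v, hv, -, rfl⟩ := hD
  intro hle
  exact (lexLE_iff_le.1 (hle v (mem_classOf_self hv) u (mem_classOf_self hu))).not_gt
    (hlt u (mem_classOf_self hu) v (mem_classOf_self hv))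

lemma ClassAt.eq_of_not_beforeC {C D : Set (Q × ℕ)} {i j : ℕ}
    (hC : ClassAt A w C i) (hD : ClassAt A w D j)
    (hCD : ¬ BeforeC A w C i D j) (hDC : ¬ BeforeC A w D j C i) : C = D := by
  obtain ⟨u, hu, rfl, rfl⟩ := hC
  obtain ⟨v, hv, rfl, rfl⟩ := hD
  have hlev : u.2 = v.2 :=
    le_antisymm (not_lt.1 fun h => hDC (Or.inl h)) (not_lt.1 fun h => hCD (Or.inl h))
  refine classOf_eq_of_profile_eq hlev (le_antisymm ?_ ?_)
  · exact not_lt.1 fun h => hDC (Or.inr ⟨hlev.symm, (profLT_classOf_iff hv hu).2 h⟩)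
  · exact not_lt.1 fun h => hCD (Or.inr ⟨hlev, (profLT_classOf_iff hu hv).2 h⟩)

lemma childC.exists_classAt {C D : Set (Q × ℕ)} (h : childC A w C D) :
    ∃ k, ClassAt A w C k ∧ ClassAt A w D (k + 1) := by
  obtain ⟨u, v, he, hv, rfl, rfl⟩ := h
  exact ⟨u.2, ⟨u, he.1.1, rfl, rfl⟩, ⟨v, hv, he.1.2.1, rfl⟩⟩

lemma DescC.level_le {C D : Set (Q × ℕ)} (h : DescC A w C D) :
    ∀ {i j}, ClassAt A w C i → ClassAt A w D j → i ≤ j := by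
  induction h using Relation.ReflTransGen.head_induction_on with
  | refl => exact fun hi hj => (hi.level_unique hj).le
  | head hCE _ ih =>
    intro i j hi hj
    obtain ⟨k, hk, hk'⟩ := hCE.exists_classAt
    have := ih hk' hj
    have := hi.level_unique hk
    omega

lemma DescC.eq_of_classAt {C D : Set (Q × ℕ)} {i : ℕ} (h : DescC A w C D)
    (hC : ClassAt A w C i) (hD : ClassAt A w D i) : C = D := by
  obtain rfl | ⟨E, hCE, hED⟩ := Relation.ReflTransGen.cases_head h
  · rfl
  · obtain ⟨k, hk, hk'⟩ := hCE.exists_classAt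
    have := DescC.level_le hED hk' hD
    have := hC.level_unique hk
    omega

variable {gl : Set (Q × ℕ) → ℕ}

lemma GlSpec.isFirst_eq_of_not_isLmd (hgl : GlSpec A w gl) {W Fm : Set (Q × ℕ)} {i j : ℕ}
    (hW : ClassAt A w W i) (hnl : ¬ ∃ m, IsLmd A w gl m i W)
    (hF : IsFirst A w gl (gl W) Fm j) : Fm = W := by
  obtain ⟨hFm, hglFm, hmin⟩ := hF
  have hfresh := ((hgl.2 W i hW).2 hnl).2
  exact hFm.eq_of_not_beforeC hW (fun hb => (hfresh Fm j hFm hb).ne hglFm) (hmin W i hW rfl)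

lemma GlSpec.profLE_of_isFirst_descC (hgl : GlSpec A w gl) {U W Fm : Set (Q × ℕ)} {i j : ℕ}
    (hU : ClassAt A w U i) (hW : ClassAt A w W i)
    (hF : IsFirst A w gl (gl W) Fm j) (hD : DescC A w Fm U) : profLE A w W U := by
  by_cases hl : ∃ m, IsLmd A w gl m i W
  · exact ((hgl.2 W i hW).1 hl).1.2.2 U hU ⟨Fm, j, hF, hD⟩
  · obtain rfl := hgl.isFirst_eq_of_not_isLmd hW hl hF
    obtain rfl := hD.eq_of_classAt hW hU
    exact hW.profLE_self

end ProfileTree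

theorem desc_of_first_implies_ge_general
    (A : NBW Alph Q) (w : ℕ → Alph) (gl : Set (Q × ℕ) → ℕ) (hgl : GlSpec A w gl)
    (i : ℕ) (U W : Set (Q × ℕ)) (hU : ClassAt A w U i) (hW : ClassAt A w W i) :
    (∀ Fm j, IsFirst A w gl (gl W) Fm j → DescC A w Fm U → profLE A w W U) ∧
    (profLT A w U W → ∀ Fm j, IsFirst A w gl (gl W) Fm j → ¬ DescC A w Fm U) := by
  have hge : ∀ Fm j, IsFirst A w gl (gl W) Fm j → DescC A w Fm U → profLE A w W U :=
    fun _ _ hF hD => hgl.profLE_of_isFirst_descC hU hW hF hD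
  exact ⟨hge, fun hlt Fm j hF hD => hU.not_profLE_of_profLT hW hlt (hge Fm j hF hD)⟩

/-- for classes `U`, `W` on level `i`, if `U` is a descendant of
`first(gl(W))` then `W ≼_i U`; consequently if `U ≺_i W` then `U` is not a descendant
of `first(gl(W))`. -/
theorem desc_of_first_implies_ge [Fintype Alph] [Fintype Q]
    (A : NBW Alph Q) (w : ℕ → Alph) (gl : Set (Q × ℕ) → ℕ) (hgl : GlSpec A w gl)
    (i : ℕ) (U W : Set (Q × ℕ)) (hU : ClassAt A w U i) (hW : ClassAt A w W i) :
    (∀ Fm j, IsFirst A w gl (gl W) Fm j → DescC A w Fm U → profLE A w W U) ∧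
    (profLT A w U W → ∀ Fm j, IsFirst A w gl (gl W) Fm j → ¬ DescC A w Fm U) :=
  desc_of_first_implies_ge_general A w gl hgl i U W hU hW
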